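/- arXiv:2212.02801 — 3 statements merged into one kernel-verified Lean document; each statement's English description precedes it below -/
import Mathlib

section
/- The expected zero-one risk admits the positive-unlabeled representation R = 2π_P·R_P + E_{x∼p}[ŷ(x)] − π_P, where R_P = 1 − E_{x∼p_P}[ŷ(x)] is the expected error on positives and p is the mixture marginal; in particular R involves no expectation over the negative class-conditional distribution. -/
open MeasureTheory Classical in
/-- The expected zero-one risk admits the positive-unlabeled representation
`R = 2π_P·R_P + E_{x∼p}[ŷ(x)] − π_P`, where `R_P = 1 − E_{x∼p_P}[ŷ(x)]` and
`p` is the mixture marginal; `R` involves no expectation under `p_N`. -/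
theorem risk_pu_representation {𝒳 : Type*} [MeasurableSpace 𝒳]
    (μP μN : Measure 𝒳) [IsProbabilityMeasure μP] [IsProbabilityMeasure μN]
    (πP : ℝ) (hπ : πP ∈ Set.Icc (0 : ℝ) 1)
    (yhat : 𝒳 → ℝ) (hmeas : Measurable yhat) (hbin : ∀ x, yhat x = 0 ∨ yhat x = 1)
    (μ : Measure 𝒳)
    (hμ : μ = ENNReal.ofReal πP • μP + ENNReal.ofReal (1 - πP) • μN) :
    πP * (∫ x, (if yhat x ≠ (1 : ℝ) then (1 : ℝ) else 0) ∂μP)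
      + (1 - πP) * (∫ x, (if yhat x ≠ (0 : ℝ) then (1 : ℝ) else 0) ∂μN)
      = 2 * πP * (1 - ∫ x, yhat x ∂μP) + (∫ x, yhat x ∂μ) - πP := by
  obtain ⟨h0, h1⟩ := hπ
  have hbound : ∀ x, |yhat x| ≤ 1 := by
    intro x; rcases hbin x with h | h <;> simp [h]
  have hintP : Integrable yhat μP :=
    (integrable_const (1:ℝ)).mono' hmeas.aestronglyMeasurable
      (Filter.Eventually.of_forall fun x => by simpa using hbound x)
  have hintN : Integrable yhat μN :=
    (integrable_const (1:ℝ)).mono' hmeas.aestronglyMeasurable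
      (Filter.Eventually.of_forall fun x => by simpa using hbound x)
  have e1 : (fun x => if yhat x ≠ (1 : ℝ) then (1 : ℝ) else 0) = fun x => 1 - yhat x := by
    funext x; rcases hbin x with h | h <;> simp [h]
  have e2 : (fun x => if yhat x ≠ (0 : ℝ) then (1 : ℝ) else 0) = yhat := by
    funext x; rcases hbin x with h | h <;> simp [h]
  have i1 : (∫ x, (if yhat x ≠ (1 : ℝ) then (1 : ℝ) else 0) ∂μP) = 1 - ∫ x, yhat x ∂μP := by
    rw [e1, integral_sub (integrable_const 1) hintP]
    simp
  have i2 : (∫ x, (if yhat x ≠ (0 : ℝ) then (1 : ℝ) else 0) ∂μN) = ∫ x, yhat x ∂μN := by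
    rw [e2]
  have iμ : (∫ x, yhat x ∂μ) = πP * (∫ x, yhat x ∂μP) + (1 - πP) * (∫ x, yhat x ∂μN) := by
    rw [hμ, integral_add_measure (hintP.smul_measure (by simp)) (hintN.smul_measure (by simp)),
      integral_smul_measure, integral_smul_measure,
      ENNReal.toReal_ofReal h0, ENNReal.toReal_ofReal (by linarith)]
    simp only [smul_eq_mul]
  rw [i1, i2, iμ]; ring
end

section
/- The expected zero-one risk is bounded by the label-distribution-alignment risk: R = 2π_P·R_P + (E_{x∼p}[ŷ(x)] − π_P) ≤ 2π_P·R_P + |E_{x∼p}[ŷ(x)] − π_P| = R_lab, so R ≤ R_lab. -/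
open MeasureTheory Classical in
/-- `R = 2π_P·R_P + (E_{x∼p}[ŷ(x)] − π_P) ≤ 2π_P·R_P + |E_{x∼p}[ŷ(x)] − π_P| = R_lab`,
hence `R ≤ R_lab`, where `R` is the expected zero-one risk and
`R_lab := 2π_P·R_P + |E_{x∼p}[ŷ(x)] − π_P|` with `R_P = 1 − E_{x∼p_P}[ŷ(x)]`. -/
theorem risk_le_label_distribution_risk {𝒳 : Type*} [MeasurableSpace 𝒳]
    (μP μN : Measure 𝒳) [IsProbabilityMeasure μP] [IsProbabilityMeasure μN]
    (πP : ℝ) (hπ : πP ∈ Set.Icc (0 : ℝ) 1)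
    (yhat : 𝒳 → ℝ) (hmeas : Measurable yhat) (hbin : ∀ x, yhat x = 0 ∨ yhat x = 1)
    (μ : Measure 𝒳)
    (hμ : μ = ENNReal.ofReal πP • μP + ENNReal.ofReal (1 - πP) • μN)
    (R RP Rlab : ℝ)
    (hR : R = πP * (∫ x, (if yhat x ≠ (1 : ℝ) then (1 : ℝ) else 0) ∂μP)
        + (1 - πP) * (∫ x, (if yhat x ≠ (0 : ℝ) then (1 : ℝ) else 0) ∂μN))
    (hRP : RP = 1 - ∫ x, yhat x ∂μP)
    (hRlab : Rlab = 2 * πP * RP + |(∫ x, yhat x ∂μ) - πP|) :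
    R = 2 * πP * RP + ((∫ x, yhat x ∂μ) - πP) ∧ R ≤ Rlab := by
  obtain ⟨h0, h1⟩ := hπ
  have hint : ∀ (ν : Measure 𝒳), Integrable yhat ν → IsProbabilityMeasure ν → True := fun _ _ _ => trivial
  have hI : ∀ (ν : Measure 𝒳) [IsFiniteMeasure ν], Integrable yhat ν := by
    intro ν _
    refine (integrable_const (1 : ℝ)).mono' hmeas.aestronglyMeasurable ?_
    filter_upwards with x
    rcases hbin x with h | h <;> simp [h]
  have e1 : ∀ x, (if yhat x ≠ (1 : ℝ) then (1 : ℝ) else 0) = 1 - yhat x := by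
    intro x; rcases hbin x with h | h <;> simp [h]
  have e0 : ∀ x, (if yhat x ≠ (0 : ℝ) then (1 : ℝ) else 0) = yhat x := by
    intro x; rcases hbin x with h | h <;> simp [h]
  have hIP : (∫ x, (if yhat x ≠ (1 : ℝ) then (1 : ℝ) else 0) ∂μP) = 1 - ∫ x, yhat x ∂μP := by
    simp only [e1]
    rw [integral_sub (integrable_const 1) (hI μP)]
    simp
  have hIN : (∫ x, (if yhat x ≠ (0 : ℝ) then (1 : ℝ) else 0) ∂μN) = ∫ x, yhat x ∂μN := by
    simp only [e0]
  have hμint : (∫ x, yhat x ∂μ) = πP * (∫ x, yhat x ∂μP) + (1 - πP) * (∫ x, yhat x ∂μN) := by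
    rw [hμ, integral_add_measure ((hI μP).smul_measure (by simp)) ((hI μN).smul_measure (by simp)),
      integral_smul_measure, integral_smul_measure,
      ENNReal.toReal_ofReal h0, ENNReal.toReal_ofReal (by linarith)]
    simp only [smul_eq_mul]
  have key : R = 2 * πP * RP + ((∫ x, yhat x ∂μ) - πP) := by
    rw [hR, hRP, hIP, hIN, hμint]; ring
  refine ⟨key, ?_⟩
  rw [key, hRlab]
  have := le_abs_self ((∫ x, yhat x ∂μ) - πP)
  linarith
end

section
/- For any score function s : 𝒳 → [0,1] and threshold-free soft risk, the soft label-distribution risk R̃_lab = 2π_P·(1 − E_{p_P}[s]) + |E_{p_U}[s] − π_P| is an upper bound on the soft analogue of the classification risk R̃ = π_P·(1 − E_{p_P}[s]) + π_N·E_{p_N}[s], i.e., R̃ ≤ R̃_lab. -/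
open MeasureTheory in
/-- The soft label-distribution risk
`R̃_lab = 2π_P·(1 − E_{p_P}[s]) + |E_{p_U}[s] − π_P|` upper-bounds the soft
classification risk `R̃ = π_P·(1 − E_{p_P}[s]) + π_N·E_{p_N}[s]`. -/
theorem soft_risk_le_soft_label_distribution_risk {𝒳 : Type*} [MeasurableSpace 𝒳]
    (μP μN : Measure 𝒳) [IsProbabilityMeasure μP] [IsProbabilityMeasure μN]
    (πP : ℝ) (hπ : πP ∈ Set.Icc (0 : ℝ) 1)
    (s : 𝒳 → ℝ) (hs : ∀ x, s x ∈ Set.Icc (0 : ℝ) 1)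
    (hIP : Integrable s μP) (hIN : Integrable s μN)
    (μU : Measure 𝒳)
    (hμU : μU = ENNReal.ofReal πP • μP + ENNReal.ofReal (1 - πP) • μN) :
    πP * (1 - ∫ x, s x ∂μP) + (1 - πP) * (∫ x, s x ∂μN)
      ≤ 2 * πP * (1 - ∫ x, s x ∂μP) + |(∫ x, s x ∂μU) - πP| := by
  obtain ⟨h0, h1⟩ := hπ
  have hU : (∫ x, s x ∂μU) = πP * ∫ x, s x ∂μP + (1 - πP) * ∫ x, s x ∂μN := by
    rw [hμU, integral_add_measure (hIP.smul_measure (by simp)) (hIN.smul_measure (by simp)),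
      integral_smul_measure, integral_smul_measure,
      ENNReal.toReal_ofReal h0, ENNReal.toReal_ofReal (by linarith), smul_eq_mul, smul_eq_mul]
  have key : (1 - πP) * (∫ x, s x ∂μN) - πP * (1 - ∫ x, s x ∂μP)
      ≤ |(∫ x, s x ∂μU) - πP| := by
    rw [hU]
    have : πP * ∫ x, s x ∂μP + (1 - πP) * ∫ x, s x ∂μN - πP
        = (1 - πP) * (∫ x, s x ∂μN) - πP * (1 - ∫ x, s x ∂μP) := by ring
    rw [this]
    exact le_abs_self _
  linarith
end
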